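/- Let $(r,m,l)$ be a representation of a Leibniz triple system $(\mathfrak{L},\{\cdot,\cdot,\cdot\})$ on $V$, and $T:V\to\mathfrak{L}$ a linear map. Define $\widehat{T}\in\mathrm{End}(\mathfrak{L}\oplus V)$ by $\widehat{T}(x+u)=Tu$. Then $T$ is a relative Rota-Baxter operator if and only if $\widehat{T}$ is a Rota-Baxter operator on the semidirect product Leibniz triple system $\mathfrak{L}\oplus V$. -/

import Mathlib

def IsTrilin (K : Type*) [Field K] {L M : Type*} [AddCommGroup L] [Module K L]
    [AddCommGroup M] [Module K M] (t : L → L → L → M) : Prop :=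
  (∀ y z, IsLinearMap K fun x => t x y z) ∧ (∀ x z, IsLinearMap K fun y => t x y z) ∧
    (∀ x y, IsLinearMap K fun z => t x y z)

def LTSIdent {L : Type*} [AddCommGroup L] (t : L → L → L → L) : Prop :=
  (∀ a b c d e, t a b (t c d e) =
      t (t a b c) d e - t (t a b d) c e - t (t a b e) c d + t (t a b e) d c) ∧
  (∀ a b c d e, t a (t b c d) e =
      t (t a b c) d e - t (t a c b) d e - t (t a d b) c e + t (t a d c) b e)

def IsLTS (K : Type*) [Field K] {L : Type*} [AddCommGroup L] [Module K L]
    (t : L → L → L → L) : Prop := IsTrilin K t ∧ LTSIdent t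

def sd {L V : Type*} [AddCommGroup L] [AddCommGroup V]
    (t : L → L → L → L) (l m r : L → L → V → V) :
    L × V → L × V → L × V → L × V :=
  fun p q s => (t p.1 q.1 s.1, l p.1 q.1 s.2 + m p.1 s.1 q.2 + r q.1 s.1 p.2)

def IsRep (K : Type*) [Field K] {L V : Type*} [AddCommGroup L] [Module K L]
    [AddCommGroup V] [Module K V] (t : L → L → L → L) (l m r : L → L → V → V) : Prop :=
  IsLTS K (sd t l m r)

def IsRRB {K : Type*} [Field K] {L V : Type*} [AddCommGroup L] [Module K L]
    [AddCommGroup V] [Module K V] (t : L → L → L → L) (l m r : L → L → V → V)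
    (T : V →ₗ[K] L) : Prop :=
  ∀ u v w, t (T u) (T v) (T w) =
    T (l (T u) (T v) w + m (T u) (T w) v + r (T v) (T w) u)

def IsRB {K : Type*} [Field K] {L : Type*} [AddCommGroup L] [Module K L]
    (t : L → L → L → L) (R : L →ₗ[K] L) : Prop :=
  ∀ x y z, t (R x) (R y) (R z) =
    R (t (R x) (R y) z + t (R x) y (R z) + t x (R y) (R z))

def IsNij {K : Type*} [Field K] {A : Type*} [AddCommGroup A] [Module K A]
    (t : A → A → A → A) (N : A →ₗ[K] A) : Prop :=
  ∀ x y z, t (N x) (N y) (N z) =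
    N (t (N x) (N y) z) + N (t x (N y) (N z)) + N (t (N x) y (N z))
      - N (N (t (N x) y z)) - N (N (t x (N y) z)) - N (N (t x y (N z)))
      + N (N (N (t x y z)))

theorem stmt3 {K : Type*} [Field K] {L V : Type*} [AddCommGroup L] [Module K L]
    [AddCommGroup V] [Module K V]
    (t : L → L → L → L) (l m r : L → L → V → V)
    (hL : IsLTS K t) (hrep : IsRep K t l m r) (T : V →ₗ[K] L) :
    IsRRB t l m r T ↔
      IsRB (sd t l m r)
        ((T ∘ₗ LinearMap.snd K L V).prod (0 : L × V →ₗ[K] V)) := by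
  obtain ⟨⟨hl1, hl2, hl3⟩, _⟩ := hrep
  have e3 : ∀ (a b : L) (u v : V), l a b 0 + m a 0 v + r b 0 u = 0 := by
    intro a b u v
    simpa [sd] using congrArg Prod.snd ((hl3 (a, u) (b, v)).map_zero)
  have e2 : ∀ (a c : L) (u w : V), l a 0 w + m a c 0 + r 0 c u = 0 := by
    intro a c u w
    simpa [sd] using congrArg Prod.snd ((hl2 (a, u) (c, w)).map_zero)
  have e1 : ∀ (b c : L) (v w : V), l 0 b w + m 0 c v + r b c 0 = 0 := by
    intro b c v w
    simpa [sd] using congrArg Prod.snd ((hl1 (b, v) (c, w)).map_zero)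
  have key : ∀ a b c : L, l a b 0 + m a c 0 + r b c 0 = 0 := by
    intro a b c
    have A := e3 a b 0 0
    have B := e2 a c 0 0
    have C := e1 b c 0 0
    have D := e3 a 0 0 0
    have E := e3 0 b 0 0
    have F := e2 0 c 0 0
    have G := e3 0 0 0 0
    have h : l a b 0 + m a c 0 + r b c 0 =
        (l a b 0 + m a 0 0 + r b 0 0) + (l a 0 0 + m a c 0 + r 0 c 0) +
          (l 0 b 0 + m 0 c 0 + r b c 0) - (l a 0 0 + m a 0 0 + r 0 0 0) -
          (l 0 b 0 + m 0 0 0 + r b 0 0) - (l 0 0 0 + m 0 c 0 + r 0 c 0) +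
          (l 0 0 0 + m 0 0 0 + r 0 0 0) := by abel
    rw [h, A, B, C, D, E, F, G]
    abel
  constructor
  · intro hT x y z
    have g1 := key (T x.2) (T y.2) z.1
    have g2 := key (T x.2) y.1 (T z.2)
    have g3 := key x.1 (T y.2) (T z.2)
    have g4 := key (T x.2) (T y.2) (T z.2)
    have hs : (l (T x.2) (T y.2) z.2 + m (T x.2) z.1 0 + r (T y.2) z.1 0) +
        (l (T x.2) y.1 0 + m (T x.2) (T z.2) y.2 + r y.1 (T z.2) 0) +
        (l x.1 (T y.2) 0 + m x.1 (T z.2) 0 + r (T y.2) (T z.2) x.2) =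
        l (T x.2) (T y.2) z.2 + m (T x.2) (T z.2) y.2 + r (T y.2) (T z.2) x.2 := by
      have h : (l (T x.2) (T y.2) z.2 + m (T x.2) z.1 0 + r (T y.2) z.1 0) +
          (l (T x.2) y.1 0 + m (T x.2) (T z.2) y.2 + r y.1 (T z.2) 0) +
          (l x.1 (T y.2) 0 + m x.1 (T z.2) 0 + r (T y.2) (T z.2) x.2) =
          (l (T x.2) (T y.2) z.2 + m (T x.2) (T z.2) y.2 + r (T y.2) (T z.2) x.2) +
          ((l (T x.2) (T y.2) 0 + m (T x.2) z.1 0 + r (T y.2) z.1 0) +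
            (l (T x.2) y.1 0 + m (T x.2) (T z.2) 0 + r y.1 (T z.2) 0) +
            (l x.1 (T y.2) 0 + m x.1 (T z.2) 0 + r (T y.2) (T z.2) 0) -
            (l (T x.2) (T y.2) 0 + m (T x.2) (T z.2) 0 + r (T y.2) (T z.2) 0)) := by
        abel
      rw [h, g1, g2, g3, g4]
      abel
    show sd t l m r _ _ _ = _
    simp only [LinearMap.prod_apply, LinearMap.comp_apply, LinearMap.snd_apply,
      LinearMap.zero_apply, Function.prod, sd]
    refine Prod.ext ?_ ?_
    · simp only [Prod.snd_add]
      rw [hs]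
      exact hT x.2 y.2 z.2
    · simpa using g4
  · intro hRB u v w
    have h := hRB (0, u) (0, v) (0, w)
    simp only [LinearMap.prod_apply, LinearMap.comp_apply, LinearMap.snd_apply,
      LinearMap.zero_apply, Function.prod, sd] at h
    have h1 := congrArg Prod.fst h
    simp only at h1
    simp only [Prod.snd_add] at h1
    rw [h1]
    congr 1
    have g1 := key (T u) (T v) 0
    have g2 := key (T u) 0 (T w)
    have g3 := key 0 (T v) (T w)
    have g4 := key (T u) (T v) (T w)
    have hh : (l (T u) (T v) w + m (T u) 0 0 + r (T v) 0 0) +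
        (l (T u) 0 0 + m (T u) (T w) v + r 0 (T w) 0) +
        (l 0 (T v) 0 + m 0 (T w) 0 + r (T v) (T w) u) =
        (l (T u) (T v) w + m (T u) (T w) v + r (T v) (T w) u) +
        ((l (T u) (T v) 0 + m (T u) 0 0 + r (T v) 0 0) +
          (l (T u) 0 0 + m (T u) (T w) 0 + r 0 (T w) 0) +
          (l 0 (T v) 0 + m 0 (T w) 0 + r (T v) (T w) 0) -
          (l (T u) (T v) 0 + m (T u) (T w) 0 + r (T v) (T w) 0)) := by abel
    rw [hh, g1, g2, g3, g4]
    abel
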